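/- Let A, B be nonempty subsets of a normed space X and T a p-cyclic φ-contraction mapping. Let (x₀,y₀) ∈ A × B, x_n = T(x_{n-1}, y_{n-1}), y_n = T(y_{n-1}, x_{n-1}). If the sequence {(x_{2n}, y_{2n})} has a subsequence converging to some (x,y) ∈ A × B, then ‖x − T(x,y)‖ = dist(A,B) and ‖y − T(y,x)‖ = dist(A,B), i.e., (x,y) is a coupled best proximity point of T. -/

import Mathlib

/-!
Pass to `X × X` with the max norm. There the coupled map `S (u, v) = (T u v, T v u)` is a cyclic
φ-contraction between `A × B` and `B × A`; as both coordinates of `p ∈ A × B` and `S p ∈ B × A`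
are at least `d = dist(A, B)` apart, it suffices to show `dist p (S p) = d`. Along the orbit the gaps
`cₙ = dist zₙ zₙ₊₁` satisfy `d ≤ cₙ₊₁ ≤ cₙ - φ cₙ + φ d`, so they decrease to some `L ≥ d`; every
step then drops by at least `φ L - φ d`, which forces `L = d`. Finally, with `w = z_{2kᵢ-1}` in
`B × A`, `dist p (S p) ≤ 2 dist p (S w) + dist w (S w)` because `S` does not expand distances
between the two sets, and the right-hand side tends to `d`.
-/

open Filter Topology Set

/-- `setDist A B = inf {‖a - b‖ : a ∈ A, b ∈ B}`. -/
noncomputable def setDist {X : Type*} [NormedAddCommGroup X] (A B : Set X) : ℝ :=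
  sInf {d : ℝ | ∃ a ∈ A, ∃ b ∈ B, d = ‖a - b‖}

theorem setDist_nonneg {X : Type*} [NormedAddCommGroup X] (A B : Set X) : 0 ≤ setDist A B :=
  Real.sInf_nonneg <| by rintro _ ⟨a, -, b, -, rfl⟩; exact norm_nonneg _

theorem setDist_le_norm_sub {X : Type*} [NormedAddCommGroup X] {A B : Set X} {a b : X}
    (ha : a ∈ A) (hb : b ∈ B) : setDist A B ≤ ‖a - b‖ :=
  csInf_le ⟨0, by rintro _ ⟨a, -, b, -, rfl⟩; exact norm_nonneg _⟩ ⟨a, ha, b, hb, rfl⟩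

theorem tendsto_of_forall_le_of_succ_le_sub_add {φ : ℝ → ℝ} (hφ : StrictMonoOn φ (Ici 0))
    {d : ℝ} (hd : 0 ≤ d) {c : ℕ → ℝ} (hdc : ∀ n, d ≤ c n)
    (hc : ∀ n, c (n + 1) ≤ c n - φ (c n) + φ d) : Tendsto c atTop (𝓝 d) := by
  have hanti : Antitone c := antitone_nat_of_succ_le fun n => by
    have := hφ.monotoneOn hd (hd.trans (hdc n)) (hdc n)
    linarith [hc n]
  have hbdd : BddBelow (range c) := ⟨d, forall_mem_range.2 hdc⟩
  have hL : Tendsto c atTop (𝓝 (⨅ n, c n)) := tendsto_atTop_ciInf hanti hbdd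
  have hdL : d ≤ ⨅ n, c n := le_ciInf hdc
  have hdrop : ∀ n, φ (⨅ n, c n) - φ d ≤ c n - c (n + 1) := fun n => by
    have := hφ.monotoneOn (hd.trans hdL) (hd.trans (hdc n)) (ciInf_le hbdd n)
    linarith [hc n]
  have hdiff : Tendsto (fun n => c n - c (n + 1)) atTop (𝓝 0) := by
    simpa using hL.sub (hL.comp (tendsto_add_atTop_nat 1))
  have hLd : ⨅ n, c n ≤ d :=
    (hφ.le_iff_le (hd.trans hdL) hd).1 (by linarith [ge_of_tendsto' hdiff hdrop])
  rwa [le_antisymm hLd hdL] at hL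

/-- `d` stands for `dist(P, Q)`; only the lower bound `le_dist` is asked of it. -/
structure IsCyclicPhiContraction {Y : Type*} [PseudoMetricSpace Y] (P Q : Set Y) (S : Y → Y)
    (φ : ℝ → ℝ) (d : ℝ) : Prop where
  strictMonoOn : StrictMonoOn φ (Ici 0)
  nonneg : 0 ≤ d
  mapsTo_left : MapsTo S P Q
  mapsTo_right : MapsTo S Q P
  le_dist : ∀ z ∈ P, ∀ w ∈ Q, d ≤ dist z w
  dist_le : ∀ z ∈ P, ∀ w ∈ Q, dist (S z) (S w) ≤ dist z w - φ (dist z w) + φ d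

namespace IsCyclicPhiContraction

variable {Y : Type*} [PseudoMetricSpace Y] {P Q : Set Y} {S : Y → Y} {φ : ℝ → ℝ} {d : ℝ}

theorem symm (h : IsCyclicPhiContraction P Q S φ d) : IsCyclicPhiContraction Q P S φ d where
  strictMonoOn := h.strictMonoOn
  nonneg := h.nonneg
  mapsTo_left := h.mapsTo_right
  mapsTo_right := h.mapsTo_left
  le_dist z hz w hw := dist_comm z w ▸ h.le_dist w hw z hz
  dist_le z hz w hw := by
    simpa only [dist_comm] using h.dist_le w hw z hz

theorem dist_apply_le_dist (h : IsCyclicPhiContraction P Q S φ d) {z w : Y} (hz : z ∈ P)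
    (hw : w ∈ Q) : dist (S z) (S w) ≤ dist z w := by
  have := h.strictMonoOn.monotoneOn h.nonneg (h.nonneg.trans (h.le_dist z hz w hw))
    (h.le_dist z hz w hw)
  linarith [h.dist_le z hz w hw]

theorem mapsTo_union (h : IsCyclicPhiContraction P Q S φ d) : MapsTo S (P ∪ Q) (P ∪ Q) :=
  (h.mapsTo_left.union_union h.mapsTo_right).mono_right (union_comm Q P).le

theorem le_dist_apply (h : IsCyclicPhiContraction P Q S φ d) {z : Y} (hz : z ∈ P ∪ Q) :
    d ≤ dist z (S z) := by
  rcases hz with hz | hz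
  · exact h.le_dist z hz _ (h.mapsTo_left hz)
  · exact h.symm.le_dist z hz _ (h.mapsTo_right hz)

theorem dist_apply_apply_le (h : IsCyclicPhiContraction P Q S φ d) {z : Y} (hz : z ∈ P ∪ Q) :
    dist (S z) (S (S z)) ≤ dist z (S z) - φ (dist z (S z)) + φ d := by
  rcases hz with hz | hz
  · exact h.dist_le z hz _ (h.mapsTo_left hz)
  · exact h.symm.dist_le z hz _ (h.mapsTo_right hz)

theorem tendsto_dist_iterate (h : IsCyclicPhiContraction P Q S φ d) {z : Y} (hz : z ∈ P ∪ Q) :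
    Tendsto (fun n => dist (S^[n] z) (S (S^[n] z))) atTop (𝓝 d) := by
  have hmem : ∀ n, S^[n] z ∈ P ∪ Q := fun n => h.mapsTo_union.iterate n hz
  refine tendsto_of_forall_le_of_succ_le_sub_add h.strictMonoOn h.nonneg
    (fun n => ?_) (fun n => ?_)
  · exact h.le_dist_apply (hmem n)
  · simpa only [Function.iterate_succ_apply'] using h.dist_apply_apply_le (hmem n)

theorem iterate_mem_of_odd (h : IsCyclicPhiContraction P Q S φ d) {z : Y} (hz : z ∈ P) {n : ℕ}
    (hn : Odd n) : S^[n] z ∈ Q := by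
  obtain ⟨m, rfl⟩ := hn
  rw [Function.iterate_add_apply, Function.iterate_mul]
  exact (h.mapsTo_left.comp h.mapsTo_right).iterate m (h.mapsTo_left hz)

theorem dist_apply_le_of_tendsto (h : IsCyclicPhiContraction P Q S φ d) {p : Y} (hp : p ∈ P)
    {ι : Type*} {l : Filter ι} [l.NeBot] {w : ι → Y} (hw : ∀ᶠ i in l, w i ∈ Q)
    (hSw : Tendsto (fun i => S (w i)) l (𝓝 p))
    (hdw : Tendsto (fun i => dist (w i) (S (w i))) l (𝓝 d)) : dist p (S p) ≤ d := by
  have hlim : Tendsto (fun i => 2 * dist (S (w i)) p + dist (w i) (S (w i))) l (𝓝 d) := by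
    simpa using ((tendsto_iff_dist_tendsto_zero.1 hSw).const_mul 2).add hdw
  refine ge_of_tendsto hlim (hw.mono fun i hwi => ?_)
  calc dist p (S p) ≤ dist p (S (w i)) + dist (S p) (S (w i)) := dist_triangle_right _ _ _
    _ ≤ dist p (S (w i)) + (dist (w i) (S (w i)) + dist (S (w i)) p) := by
        gcongr
        exact (h.dist_apply_le_dist hp hwi).trans (by rw [dist_comm]; exact dist_triangle _ _ _)
    _ = 2 * dist (S (w i)) p + dist (w i) (S (w i)) := by rw [dist_comm p]; ring

theorem dist_apply_eq_of_tendsto_iterate (h : IsCyclicPhiContraction P Q S φ d) {z p : Y}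
    (hz : z ∈ P) (hp : p ∈ P) {k : ℕ → ℕ} (hk : StrictMono k)
    (hconv : Tendsto (fun i => S^[2 * k i] z) atTop (𝓝 p)) : dist p (S p) = d := by
  have hk1 : ∀ᶠ i in atTop, 1 ≤ k i :=
    eventually_atTop.2 ⟨1, fun i hi => hi.trans (hk.id_le i)⟩
  have hodd : Tendsto (fun i => 2 * k i - 1) atTop atTop :=
    tendsto_atTop_mono (fun i => show i ≤ _ by have : i ≤ k i := hk.id_le i; omega) tendsto_id
  refine le_antisymm (h.dist_apply_le_of_tendsto hp (w := fun i => S^[2 * k i - 1] z) ?_ ?_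
    ((h.tendsto_dist_iterate (Or.inl hz)).comp hodd)) (h.le_dist p hp _ (h.mapsTo_left hp))
  · exact hk1.mono fun i hi => h.iterate_mem_of_odd hz ⟨k i - 1, by omega⟩
  · refine hconv.congr' (hk1.mono fun i hi => ?_)
    show _ = S _
    rw [← Function.iterate_succ_apply' S, Nat.succ_eq_add_one, Nat.sub_add_cancel (by omega)]

end IsCyclicPhiContraction

def coupledMap {X : Type*} (T : X → X → X) (p : X × X) : X × X := (T p.1 p.2, T p.2 p.1)

theorem coupledMap_iterate {X : Type*} {T : X → X → X} {x y : ℕ → X}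
    (hx : ∀ n, x (n + 1) = T (x n) (y n)) (hy : ∀ n, y (n + 1) = T (y n) (x n)) (n : ℕ) :
    (coupledMap T)^[n] (x 0, y 0) = (x n, y n) := by
  induction n with
  | zero => rfl
  | succ n ih => rw [Function.iterate_succ_apply', ih, coupledMap, hx, hy]

theorem isCyclicPhiContraction_coupledMap {X : Type*} [NormedAddCommGroup X] {A B : Set X}
    {T : X → X → X} {φ : ℝ → ℝ} (hφ : StrictMonoOn φ (Ici 0))
    (hTB : ∀ x ∈ A, ∀ y ∈ B, T x y ∈ B) (hTA : ∀ x ∈ B, ∀ y ∈ A, T x y ∈ A)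
    (hT : ∀ x₁ ∈ A, ∀ y₁ ∈ B, ∀ x₂ ∈ B, ∀ y₂ ∈ A,
      ‖T x₁ y₁ - T x₂ y₂‖ ≤ ‖((x₁, y₁) : X × X) - (x₂, y₂)‖
        - φ ‖((x₁, y₁) : X × X) - (x₂, y₂)‖ + φ (setDist A B)) :
    IsCyclicPhiContraction (A ×ˢ B) (B ×ˢ A) (coupledMap T) φ (setDist A B) where
  strictMonoOn := hφ
  nonneg := setDist_nonneg A B
  mapsTo_left p hp := ⟨hTB _ hp.1 _ hp.2, hTA _ hp.2 _ hp.1⟩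
  mapsTo_right p hp := ⟨hTA _ hp.1 _ hp.2, hTB _ hp.2 _ hp.1⟩
  le_dist z hz w hw := by
    rw [Prod.dist_eq, dist_eq_norm]
    exact (setDist_le_norm_sub hz.1 hw.1).trans (le_max_left _ _)
  dist_le := by
    rintro ⟨a, b⟩ hz ⟨a', b'⟩ hw
    have hswap : ‖((b', a') : X × X) - (b, a)‖ = ‖((a, b) : X × X) - (a', b')‖ := by
      simp only [Prod.norm_def, Prod.mk_sub_mk, norm_sub_rev b', norm_sub_rev a', max_comm]
    rw [Prod.dist_eq, dist_eq_norm (a, b)]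
    refine max_le ?_ ?_
    · rw [dist_eq_norm]
      exact hT a hz.1 b hz.2 a' hw.1 b' hw.2
    · rw [dist_eq_norm, norm_sub_rev, ← hswap]
      exact hT b' hw.2 a' hw.1 b hz.2 a hz.1

theorem stmt4_general {X : Type*} [NormedAddCommGroup X]
    (A B : Set X)
    (T : X → X → X) (φ : ℝ → ℝ)
    (hφmono : StrictMonoOn φ (Set.Ici 0))
    (hTB : ∀ x ∈ A, ∀ y ∈ B, T x y ∈ B)
    (hTA : ∀ x ∈ B, ∀ y ∈ A, T x y ∈ A)
    (hT : ∀ x₁ ∈ A, ∀ y₁ ∈ B, ∀ x₂ ∈ B, ∀ y₂ ∈ A,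
      ‖T x₁ y₁ - T x₂ y₂‖ ≤ ‖((x₁, y₁) : X × X) - (x₂, y₂)‖
        - φ ‖((x₁, y₁) : X × X) - (x₂, y₂)‖ + φ (setDist A B))
    (x y : ℕ → X) (hx0 : x 0 ∈ A) (hy0 : y 0 ∈ B)
    (hx : ∀ n, x (n + 1) = T (x n) (y n))
    (hy : ∀ n, y (n + 1) = T (y n) (x n))
    (k : ℕ → ℕ) (hk : StrictMono k) (x' y' : X) (hx' : x' ∈ A) (hy' : y' ∈ B)
    (hconv : Tendsto (fun i : ℕ => ((x (2 * k i), y (2 * k i)) : X × X))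
      atTop (𝓝 (x', y'))) :
    ‖x' - T x' y'‖ = setDist A B ∧ ‖y' - T y' x'‖ = setDist A B := by
  have hbest :=
    (isCyclicPhiContraction_coupledMap hφmono hTB hTA hT).dist_apply_eq_of_tendsto_iterate
      (mk_mem_prod hx0 hy0) (mk_mem_prod hx' hy') hk
      (by simpa only [coupledMap_iterate hx hy] using hconv)
  rw [Prod.dist_eq] at hbest
  simp only [coupledMap, dist_eq_norm] at hbest
  have hxlo := setDist_le_norm_sub hx' (hTB x' hx' y' hy')
  have hylo := norm_sub_rev y' _ ▸ setDist_le_norm_sub (hTA y' hy' x' hx') hy'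
  exact ⟨le_antisymm (hbest ▸ le_max_left _ _) hxlo,
    le_antisymm (hbest ▸ le_max_right _ _) hylo⟩

theorem stmt4 {X : Type*} [NormedAddCommGroup X] [NormedSpace ℝ X]
    (A B : Set X) (hA : A.Nonempty) (hB : B.Nonempty)
    (T : X → X → X) (φ : ℝ → ℝ)
    (hφmono : StrictMonoOn φ (Set.Ici 0)) (hφpos : ∀ t ≥ (0:ℝ), 0 ≤ φ t)
    (hTB : ∀ x ∈ A, ∀ y ∈ B, T x y ∈ B)
    (hTA : ∀ x ∈ B, ∀ y ∈ A, T x y ∈ A)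
    (hT : ∀ x₁ ∈ A, ∀ y₁ ∈ B, ∀ x₂ ∈ B, ∀ y₂ ∈ A,
      ‖T x₁ y₁ - T x₂ y₂‖ ≤ ‖((x₁, y₁) : X × X) - (x₂, y₂)‖
        - φ ‖((x₁, y₁) : X × X) - (x₂, y₂)‖ + φ (setDist A B))
    (x y : ℕ → X) (hx0 : x 0 ∈ A) (hy0 : y 0 ∈ B)
    (hx : ∀ n, x (n + 1) = T (x n) (y n))
    (hy : ∀ n, y (n + 1) = T (y n) (x n))
    (k : ℕ → ℕ) (hk : StrictMono k) (x' y' : X) (hx' : x' ∈ A) (hy' : y' ∈ B)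
    (hconv : Tendsto (fun i : ℕ => ((x (2 * k i), y (2 * k i)) : X × X))
      atTop (𝓝 (x', y'))) :
    ‖x' - T x' y'‖ = setDist A B ∧ ‖y' - T y' x'‖ = setDist A B :=
  stmt4_general A B T φ hφmono hTB hTA hT x y hx0 hy0 hx hy k hk x' y' hx' hy' hconv
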